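/- (Wasserstein autoencoder theorem, kernel form.) Let X and Z be standard Borel spaces, P_X a probability measure on X, P_Z a probability measure on Z, g : Z → X measurable and c : X × X → [0,∞] measurable. Then W_c(P_X, g#P_Z) = inf over all Markov kernels Q from X to Z whose P_X-mixture equals P_Z (i.e. A ↦ ∫ Q(x)(A) dP_X(x) equals P_Z) of ∫_X ∫_Z c(x, g(z)) dQ(x)(z) dP_X(x). -/

import Mathlib

open MeasureTheory ProbabilityTheory ENNReal

/-- The Wasserstein (optimal transport) cost between two measures on `X` for a cost
function `c : X × X → ℝ≥0∞`: the infimum, over all couplings `π` of `μ` and `ν`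
(probability measures on `X × X` whose first and second marginals are `μ` and `ν`),
of `∫ c dπ`. -/
noncomputable def wassersteinCost {X : Type*} [MeasurableSpace X]
    (c : X × X → ℝ≥0∞) (μ ν : Measure X) : ℝ≥0∞ :=
  ⨅ (π : Measure (X × X)) (_ : IsProbabilityMeasure π)
    (_ : π.map Prod.fst = μ) (_ : π.map Prod.snd = ν), ∫⁻ p, c p ∂π

/-!
A Markov kernel `Q` with `Q ∘ₘ P_X = P_Z` yields the coupling `(id × g)₊(P_X ⊗ₘ Q)` of `P_X`
and `g₊P_Z`, with cost `∫∫ c (x, g z) dQ(x)(z) dP_X(x)`. Conversely, given a coupling `π` of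
`P_X` and `g₊P_Z`, disintegrate `π` along its first coordinate and then lift the second
coordinate `y` back to `Z` by the conditional law of `z ∼ P_Z` given `g z = y`. Since that law
lives on the fibre `g⁻¹{y}`, the composite kernel `X → Z` has mixture `P_Z` and the same cost
as `π`.
-/

section Coupling

variable {X Z : Type*} [MeasurableSpace X] [MeasurableSpace Z] {c : X × X → ℝ≥0∞}

lemma wassersteinCost_le_lintegral {μ ν : Measure X} (π : Measure (X × X))
    [IsProbabilityMeasure π] (hfst : π.fst = μ) (hsnd : π.snd = ν) :
    wassersteinCost c μ ν ≤ ∫⁻ p, c p ∂π :=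
  iInf₂_le_of_le π ‹_› (iInf₂_le_of_le hfst hsnd le_rfl)

lemma wassersteinCost_map_le_lintegral_kernel {g : Z → X} (hg : Measurable g) (hc : Measurable c)
    {μ : Measure X} [IsProbabilityMeasure μ] {ν : Measure Z} (Q : Kernel X Z) [IsMarkovKernel Q]
    (hQ : Q ∘ₘ μ = ν) :
    wassersteinCost c μ (ν.map g) ≤ ∫⁻ x, ∫⁻ z, c (x, g z) ∂Q x ∂μ := by
  have hgsnd : Measurable fun p : X × Z => g p.2 := hg.comp measurable_snd
  have hmap : Measurable fun p : X × Z => (p.1, g p.2) := measurable_fst.prodMk hgsnd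
  have hcg : Measurable fun p : X × Z => c (p.1, g p.2) := hc.comp hmap
  have : IsProbabilityMeasure ((μ ⊗ₘ Q).map fun p => (p.1, g p.2)) :=
    Measure.isProbabilityMeasure_map hmap.aemeasurable
  calc wassersteinCost c μ (ν.map g)
      ≤ ∫⁻ p, c p ∂(μ ⊗ₘ Q).map fun p => (p.1, g p.2) := by
        refine wassersteinCost_le_lintegral _ ?_ ?_
        · rw [Measure.fst_map_prodMk hgsnd]
          exact Measure.fst_compProd μ Q
        · rw [Measure.snd_map_prodMk measurable_fst, ← hQ, ← Measure.snd_compProd,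
            Measure.snd, Measure.map_map hg measurable_snd]
          rfl
    _ = ∫⁻ x, ∫⁻ z, c (x, g z) ∂Q x ∂μ := by
        rw [lintegral_map hc hmap, Measure.lintegral_compProd hcg]

end Coupling

section FiberKernel

variable {X Z : Type*} [MeasurableSpace X] [MeasurableSpace Z] [StandardBorelSpace Z] [Nonempty Z]

/-- The conditional law of `z ∼ ν` given `g z`. -/
noncomputable def fiberKernel (g : Z → X) (ν : Measure Z) [IsFiniteMeasure ν] : Kernel X Z :=
  (ν.map fun z => (g z, z)).condKernel

variable {g : Z → X} (ν : Measure Z) [IsFiniteMeasure ν]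

instance : IsMarkovKernel (fiberKernel g ν) := by
  unfold fiberKernel; infer_instance

lemma compProd_fiberKernel :
    ν.map g ⊗ₘ fiberKernel g ν = ν.map fun z => (g z, z) := by
  conv_lhs => rw [← Measure.fst_map_prodMk (X := g) (μ := ν) measurable_id', fiberKernel]
  exact Measure.disintegrate _ _

lemma fiberKernel_comp_map (hg : Measurable g) : fiberKernel g ν ∘ₘ ν.map g = ν := by
  rw [← Measure.snd_compProd, compProd_fiberKernel ν, Measure.snd_map_prodMk hg, Measure.map_id']

lemma ae_ae_fiberKernel [MeasurableEq X] (hg : Measurable g) :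
    ∀ᵐ x ∂ν.map g, ∀ᵐ z ∂fiberKernel g ν x, g z = x := by
  have hgraph : Measurable fun z => (g z, z) := hg.prodMk measurable_id
  refine Measure.ae_ae_of_ae_compProd (p := fun p : X × Z => g p.2 = p.1) ?_
  rw [compProd_fiberKernel ν, ae_map_iff hgraph.aemeasurable
    (measurableSet_eq_fun (f := fun p : X × Z => g p.2) (hg.comp measurable_snd) measurable_fst)]
  exact Filter.Eventually.of_forall fun z => rfl

lemma ae_forall_lintegral_fiberKernel_eq [MeasurableEq X] (hg : Measurable g) :
    ∀ᵐ x ∂ν.map g, ∀ f : X → ℝ≥0∞, ∫⁻ z, f (g z) ∂fiberKernel g ν x = f x := by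
  filter_upwards [ae_ae_fiberKernel ν hg] with x hx f
  rw [lintegral_congr_ae (hx.mono fun z hz => congrArg f hz), lintegral_const, measure_univ,
    mul_one]

end FiberKernel

section KernelOfCoupling

variable {X Z : Type*} [MeasurableSpace X] [StandardBorelSpace X] [Nonempty X]
  [MeasurableSpace Z] [StandardBorelSpace Z] [Nonempty Z]
  {g : Z → X} {ν : Measure Z} [IsFiniteMeasure ν] (π : Measure (X × X)) [IsFiniteMeasure π]

lemma fiberKernel_comp_condKernel_comp_fst (hg : Measurable g) (hsnd : π.snd = ν.map g) :
    (fiberKernel g ν ∘ₖ π.condKernel) ∘ₘ π.fst = ν := by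
  rw [← Measure.comp_assoc, ← Measure.snd_compProd π.fst, Measure.disintegrate, hsnd,
    fiberKernel_comp_map ν hg]

lemma lintegral_fiberKernel_comp_condKernel (hg : Measurable g) {c : X × X → ℝ≥0∞}
    (hc : Measurable c) (hsnd : π.snd = ν.map g) :
    ∫⁻ x, ∫⁻ z, c (x, g z) ∂(fiberKernel g ν ∘ₖ π.condKernel) x ∂π.fst = ∫⁻ p, c p ∂π := by
  have hcg : Measurable fun p : X × Z => c (p.1, g p.2) :=
    hc.comp (measurable_fst.prodMk (hg.comp measurable_snd))
  have hfiber_meas :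
      Measurable fun p : X × X => ∫⁻ z, c (p.1, g z) ∂fiberKernel g ν p.2 :=
    Measurable.lintegral_kernel_prod_right (κ := Kernel.prodMkLeft X (fiberKernel g ν))
      (f := fun p z => c (p.1, g z)) (hcg.comp (measurable_fst.fst.prodMk measurable_snd))
  have hfiber : ∀ᵐ p ∂π, ∫⁻ z, c (p.1, g z) ∂fiberKernel g ν p.2 = c p := by
    have hfib := ae_forall_lintegral_fiberKernel_eq ν hg
    rw [← hsnd] at hfib
    filter_upwards [ae_of_ae_map measurable_snd.aemeasurable hfib] with p hp
    exact hp fun y => c (p.1, y)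
  calc ∫⁻ x, ∫⁻ z, c (x, g z) ∂(fiberKernel g ν ∘ₖ π.condKernel) x ∂π.fst
      = ∫⁻ x, ∫⁻ y, ∫⁻ z, c (x, g z) ∂fiberKernel g ν y ∂π.condKernel x ∂π.fst := by
        refine lintegral_congr fun x => ?_
        exact Kernel.lintegral_comp _ _ _ (hcg.comp measurable_prodMk_left)
    _ = ∫⁻ p, ∫⁻ z, c (p.1, g z) ∂fiberKernel g ν p.2 ∂π := by
        conv_rhs => rw [← π.disintegrate π.condKernel]
        rw [Measure.lintegral_compProd hfiber_meas]
    _ = ∫⁻ p, c p ∂π := lintegral_congr_ae hfiber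

end KernelOfCoupling

/-- Wasserstein autoencoder theorem, kernel form: `W_c(P_X, g#P_Z)` equals the infimum
over all Markov kernels `Q` from `X` to `Z` whose `P_X`-mixture equals `P_Z` of
`∫∫ c (x, g z) dQ(x)(z) dP_X(x)`. -/
theorem wassersteinCost_eq_iInf_kernel
    {X Z : Type*} [MeasurableSpace X] [StandardBorelSpace X]
    [MeasurableSpace Z] [StandardBorelSpace Z]
    (P_X : Measure X) [IsProbabilityMeasure P_X]
    (P_Z : Measure Z) [IsProbabilityMeasure P_Z]
    (g : Z → X) (hg : Measurable g)
    (c : X × X → ℝ≥0∞) (hc : Measurable c) :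
    wassersteinCost c P_X (P_Z.map g) =
      ⨅ (Q : Kernel X Z) (_ : IsMarkovKernel Q) (_ : P_X.bind (fun x => Q x) = P_Z),
        ∫⁻ x, ∫⁻ z, c (x, g z) ∂(Q x) ∂P_X := by
  have : Nonempty X := nonempty_of_isProbabilityMeasure P_X
  have : Nonempty Z := nonempty_of_isProbabilityMeasure P_Z
  refine le_antisymm (le_iInf₂ fun Q _ => le_iInf fun hQ =>
    wassersteinCost_map_le_lintegral_kernel hg hc Q hQ) ?_
  refine le_iInf₂ fun π _ => le_iInf₂ fun hfst hsnd => ?_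
  subst hfst
  exact iInf₂_le_of_le (fiberKernel g P_Z ∘ₖ π.condKernel) inferInstance <|
    iInf_le_of_le (fiberKernel_comp_condKernel_comp_fst π hg hsnd)
      (lintegral_fiberKernel_comp_condKernel π hg hc hsnd).le
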